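/- Let M be a compact Riemannian manifold, a ∈ C^∞(M;ℝ), τ ∈ ℂ with |Re τ| ≤ |Im τ|/2 and |Im τ| ≥ 4‖a‖_{L^∞}. Then for all u ∈ C^∞(M), (1/4)|Im τ|²·‖u‖_{L²(M)} ≤ ‖(−Δ_g + 2ia τ − τ²)u‖_{L²(M)}. -/

import Mathlib

open MeasureTheory ComplexConjugate Complex

/-!
Pair `f = P(τ)u` with `u`. Taking real parts,
`Re ⟨f, u⟩ = Re ⟨-Δu, u⟩ - 2 Im τ ∫ a|u|² + ((Im τ)² - (Re τ)²) ‖u‖²`.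
The first term is nonnegative, `|2 Im τ ∫ a|u|²| ≤ 2|Im τ| ‖a‖_∞ ‖u‖² ≤ (Im τ)²/2 ‖u‖²` and
`(Re τ)² ≤ (Im τ)²/4`, so the right side is at least `(Im τ)²/4 ‖u‖²`; Cauchy–Schwarz bounds the
left side by `‖f‖ ‖u‖`.
-/

section L2

variable {α 𝕜 : Type*} [RCLike 𝕜] [MeasurableSpace α] {μ : Measure α} {f u : α → 𝕜}

theorem norm_integral_mul_conj_le_lpNorm_mul_lpNorm (hf : MemLp f 2 μ) (hu : MemLp u 2 μ) :
    ‖∫ x, f x * conj (u x) ∂μ‖ ≤ lpNorm f 2 μ * lpNorm u 2 μ := by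
  have h_inner : inner 𝕜 (hu.toLp u) (hf.toLp f) = ∫ x, f x * conj (u x) ∂μ := by
    rw [L2.inner_def]
    refine integral_congr_ae ((hu.coeFn_toLp.and hf.coeFn_toLp).mono fun x hx => ?_)
    simp only [RCLike.inner_apply, hx.1, hx.2]
  rw [← h_inner, ← toReal_eLpNorm hf.1, ← toReal_eLpNorm hu.1, ← Lp.norm_toLp, ← Lp.norm_toLp,
    mul_comm]
  exact norm_inner_le_norm _ _

theorem integral_norm_sq_eq_lpNorm_sq (hu : MemLp u 2 μ) :
    ∫ x, ‖u x‖ ^ 2 ∂μ = lpNorm u 2 μ ^ 2 := by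
  rw [lpNorm_eq_integral_norm_rpow_toReal two_ne_zero ENNReal.ofNat_ne_top hu.1,
    ← Real.rpow_natCast, ← Real.rpow_mul (integral_nonneg fun x => by positivity)]
  simp

end L2

namespace DampedWave

variable {α : Type*} [MeasurableSpace α] {μ : Measure α} {a : α → ℝ} {g u f : α → ℂ} {τ : ℂ}

theorem integral_mul_conj_eq (hf : ∀ x, f x = -g x + 2 * I * a x * τ * u x - τ ^ 2 * u x)
    (hg : Integrable (fun x => g x * conj (u x)) μ)
    (ha : Integrable (fun x => a x * ‖u x‖ ^ 2) μ) (hu : Integrable (fun x => ‖u x‖ ^ 2) μ) :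
    ∫ x, f x * conj (u x) ∂μ = ∫ x, -g x * conj (u x) ∂μ
      + 2 * I * τ * ↑(∫ x, a x * ‖u x‖ ^ 2 ∂μ) - τ ^ 2 * ↑(∫ x, ‖u x‖ ^ 2 ∂μ) := by
  have hpt : ∀ x, f x * conj (u x) = -g x * conj (u x)
      + 2 * I * τ * ((a x * ‖u x‖ ^ 2 : ℝ) : ℂ) - τ ^ 2 * ((‖u x‖ ^ 2 : ℝ) : ℂ) := fun x => by
    push_cast
    rw [← mul_conj', hf x]
    ring
  have hg' : Integrable (fun x => -g x * conj (u x)) μ := by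
    simpa only [neg_mul] using hg.fun_neg
  have ha' : Integrable (fun x => 2 * I * τ * ((a x * ‖u x‖ ^ 2 : ℝ) : ℂ)) μ :=
    ha.ofReal.const_mul _
  have hu' : Integrable (fun x => τ ^ 2 * ((‖u x‖ ^ 2 : ℝ) : ℂ)) μ := hu.ofReal.const_mul _
  rw [integral_congr_ae (.of_forall hpt), integral_sub (hg'.fun_add ha') hu',
    integral_add hg' ha', integral_const_mul, integral_const_mul, integral_complex_ofReal,
    integral_complex_ofReal]

theorem re_integral_mul_conj_eq (hf : ∀ x, f x = -g x + 2 * I * a x * τ * u x - τ ^ 2 * u x)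
    (hg : Integrable (fun x => g x * conj (u x)) μ)
    (ha : Integrable (fun x => a x * ‖u x‖ ^ 2) μ) (hu : Integrable (fun x => ‖u x‖ ^ 2) μ) :
    (∫ x, f x * conj (u x) ∂μ).re = (∫ x, -g x * conj (u x) ∂μ).re
      - 2 * τ.im * ∫ x, a x * ‖u x‖ ^ 2 ∂μ + (τ.im ^ 2 - τ.re ^ 2) * ∫ x, ‖u x‖ ^ 2 ∂μ := by
  rw [integral_mul_conj_eq hf hg ha hu]
  simp only [add_re, sub_re, mul_re, mul_im, I_re, I_im, ofReal_re, ofReal_im, re_ofNat,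
    im_ofNat, sq]
  ring

theorem sq_im_div_four_mul_le {C A D n : ℝ} (hτ : |τ.re| ≤ |τ.im| / 2) (hC : 4 * C ≤ |τ.im|)
    (hA : |A| ≤ C * n) (hD : 0 ≤ D) (hn : 0 ≤ n) :
    τ.im ^ 2 / 4 * n ≤ D - 2 * τ.im * A + (τ.im ^ 2 - τ.re ^ 2) * n := by
  have h_re : τ.re ^ 2 ≤ τ.im ^ 2 / 4 := by
    nlinarith [sq_abs τ.re, sq_abs τ.im, abs_nonneg τ.re]
  have h_damp : 2 * τ.im * A ≤ τ.im ^ 2 / 2 * n :=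
    calc 2 * τ.im * A ≤ |2 * τ.im * A| := le_abs_self _
      _ = 2 * |τ.im| * |A| := by rw [abs_mul, abs_mul, abs_two]
      _ ≤ 2 * |τ.im| * (C * n) := by gcongr
      _ ≤ 2 * |τ.im| * (|τ.im| / 4 * n) := by gcongr; linarith
      _ = τ.im ^ 2 / 2 * n := by rw [← sq_abs τ.im]; ring
  nlinarith [mul_le_mul_of_nonneg_right h_re hn]

end DampedWave

theorem damped_wave_L2_estimate_large_Im_general {M : Type*} [MeasurableSpace M]
    (μ : Measure M)
    (a : M → ℝ) (hbdA : BddAbove (Set.range fun x => |a x|))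
    (Δ : (M → ℂ) →ₗ[ℂ] (M → ℂ)) (τ : ℂ)
    (hτ : |τ.re| ≤ |τ.im| / 2) (hτ' : 4 * (⨆ x, |a x|) ≤ |τ.im|)
    (u f : M → ℂ)
    (hf : ∀ x, f x = -(Δ u x) + 2 * Complex.I * (a x) * τ * u x - τ ^ 2 * u x)
    (hu2 : MemLp u 2 μ) (hf2 : MemLp f 2 μ)
    (hint1 : Integrable (fun x => Δ u x * (starRingEnd ℂ) (u x)) μ)
    (hint2 : Integrable (fun x => a x * ‖u x‖ ^ 2) μ)
    (hpos : 0 ≤ (∫ x, -(Δ u x) * (starRingEnd ℂ) (u x) ∂μ).re) :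
    ENNReal.ofReal (τ.im ^ 2 / 4) * eLpNorm u 2 μ ≤ eLpNorm f 2 μ := by
  have hu_sq : Integrable (fun x => ‖u x‖ ^ 2) μ := hu2.integrable_norm_pow two_ne_zero
  have h_damp : |∫ x, a x * ‖u x‖ ^ 2 ∂μ| ≤ (⨆ x, |a x|) * ∫ x, ‖u x‖ ^ 2 ∂μ := by
    rw [← Real.norm_eq_abs, ← integral_const_mul]
    refine norm_integral_le_of_norm_le (hu_sq.const_mul _) (.of_forall fun x => ?_)
    rw [norm_mul, norm_pow, norm_norm, Real.norm_eq_abs]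
    exact mul_le_mul_of_nonneg_right (le_ciSup hbdA x) (by positivity)
  have h_re := DampedWave.re_integral_mul_conj_eq hf hint1 hint2 hu_sq
  have h_cs := (re_le_norm _).trans (norm_integral_mul_conj_le_lpNorm_mul_lpNorm hf2 hu2)
  rw [integral_norm_sq_eq_lpNorm_sq hu2] at h_damp h_re
  have h_key : τ.im ^ 2 / 4 * lpNorm u 2 μ ^ 2 ≤ lpNorm f 2 μ * lpNorm u 2 μ :=
    ((DampedWave.sq_im_div_four_mul_le hτ hτ' h_damp hpos (sq_nonneg _)).trans_eq
      h_re.symm).trans h_cs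
  have h_est : τ.im ^ 2 / 4 * lpNorm u 2 μ ≤ lpNorm f 2 μ := by
    rcases (lpNorm_nonneg : 0 ≤ lpNorm u 2 μ).eq_or_lt with h_zero | h_pos
    · rw [← h_zero, mul_zero]; exact lpNorm_nonneg
    · exact le_of_mul_le_mul_right (by rwa [mul_assoc, ← sq]) h_pos
  rw [← ofReal_lpNorm hu2, ← ofReal_lpNorm hf2, ← ENNReal.ofReal_mul (by positivity)]
  exact ENNReal.ofReal_le_ofReal h_est

/-- `L²` estimate in the region `|Re τ| ≤ |Im τ|/2`, `|Im τ| ≥ 4‖a‖_∞`: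
`(1/4)|Im τ|² ‖u‖_{L²} ≤ ‖(−Δ + 2iaτ − τ²)u‖_{L²}`. The compact manifold is
modeled by a finite measure space; the symmetry and nonnegativity of `−Δ`
(integration by parts) are hypotheses. -/
theorem damped_wave_L2_estimate_large_Im {M : Type*} [MeasurableSpace M] [Nonempty M]
    (μ : Measure M) [IsFiniteMeasure μ]
    (a : M → ℝ) (hbdA : BddAbove (Set.range fun x => |a x|))
    (Δ : (M → ℂ) →ₗ[ℂ] (M → ℂ)) (τ : ℂ)
    (hτ : |τ.re| ≤ |τ.im| / 2) (hτ' : 4 * (⨆ x, |a x|) ≤ |τ.im|)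
    (u f : M → ℂ)
    (hf : ∀ x, f x = -(Δ u x) + 2 * Complex.I * (a x) * τ * u x - τ ^ 2 * u x)
    (hu2 : MemLp u 2 μ) (hf2 : MemLp f 2 μ)
    (hint1 : Integrable (fun x => Δ u x * (starRingEnd ℂ) (u x)) μ)
    (hint2 : Integrable (fun x => a x * ‖u x‖ ^ 2) μ)
    (hsym : (∫ x, -(Δ u x) * (starRingEnd ℂ) (u x) ∂μ).im = 0)
    (hpos : 0 ≤ (∫ x, -(Δ u x) * (starRingEnd ℂ) (u x) ∂μ).re) :
    ENNReal.ofReal (τ.im ^ 2 / 4) * eLpNorm u 2 μ ≤ eLpNorm f 2 μ :=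
  damped_wave_L2_estimate_large_Im_general μ a hbdA Δ τ hτ hτ' u f hf hu2 hf2 hint1 hint2 hpos
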